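/- Let G be a simple graph and O an acyclic total orientation of G. Then indeg(O), the indegree sequence of O, is a parking function of G_• with respect to v_0, and moreover it is a maximal parking function: no parking function c of G_• satisfies c ≥ indeg(O) coordinatewise with c ≠ indeg(O). -/

import Mathlib

open Finset SimpleGraph
open scoped Classical

variable {V : Type*} [Fintype V] [DecidableEq V]

/-- `O` is a partial orientation of `G`: a set of steps along edges of `G`,
containing at most one direction per edge. -/
def IsPO (G : SimpleGraph V) (O : Finset (V × V)) : Prop :=
  ∀ p ∈ O, G.Adj p.1 p.2 ∧ (p.2, p.1) ∉ O

/-- A total orientation orients every edge. -/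
def IsTotalOn (G : SimpleGraph V) (O : Finset (V × V)) : Prop :=
  ∀ u v : V, G.Adj u v → (u, v) ∈ O ∨ (v, u) ∈ O

/-- `O` contains a directed cycle of steps. -/
def HasDirCycle (O : Finset (V × V)) : Prop :=
  ∃ (k : ℕ) (c : Fin (k + 1) → V), 1 ≤ k ∧ Function.Injective c ∧
    ∀ i : Fin (k + 1), (c i, c (i + 1)) ∈ O

/-- An acyclic partial orientation. -/
def IsAcyclicPO (G : SimpleGraph V) (O : Finset (V × V)) : Prop :=
  IsPO G O ∧ ¬ HasDirCycle O

/-- Indegree of vertex `v` in the orientation `O`. -/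
def indeg (O : Finset (V × V)) (v : V) : ℕ := (O.filter (fun p => p.2 = v)).card

/-- A potential cycle for `O`: a directed cycle of steps, each compatible with `O`
(i.e. whose reversal is not in `O`). -/
def IsPotCycle (G : SimpleGraph V) (O : Finset (V × V)) {k : ℕ} (c : Fin (k + 1) → V) : Prop :=
  1 ≤ k ∧ Function.Injective c ∧
    ∀ i : Fin (k + 1), G.Adj (c i) (c (i + 1)) ∧ (c (i + 1), c i) ∉ O

/-- Score of a step compatible with `O`, with respect to the parameter list `a`. -/
def stepScore (a : V → V → ℝ) (O : Finset (V × V)) (p : V × V) : ℝ :=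
  if p ∈ O then -(a p.2 p.1) else a p.1 p.2

/-- Score of a potential cycle. -/
def cycScore (a : V → V → ℝ) (O : Finset (V × V)) {k : ℕ} (c : Fin (k + 1) → V) : ℝ :=
  ∑ i : Fin (k + 1), stepScore a O (c i, c (i + 1))

/-- `O` is `a`-admissible: every potential cycle has strictly positive score. -/
def IsAdmissible (G : SimpleGraph V) (a : V → V → ℝ) (O : Finset (V × V)) : Prop :=
  ∀ (k : ℕ) (c : Fin (k + 1) → V), IsPotCycle G O c → 0 < cycScore a O c

/-- `O` is almost-`a`-admissible: not admissible, but no potential cycle has negative score. -/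
def IsAlmostAdmissible (G : SimpleGraph V) (a : V → V → ℝ) (O : Finset (V × V)) : Prop :=
  ¬ IsAdmissible G a O ∧
    ∀ (k : ℕ) (c : Fin (k + 1) → V), IsPotCycle G O c → 0 ≤ cycScore a O c

/-- The parameter list condition: the central region of `Σ_G(A)` is nonempty. -/
def HasCentral (G : SimpleGraph V) (a : V → V → ℝ) : Prop :=
  ∃ x : V → ℝ, ∀ u v : V, G.Adj u v → x u - x v < a u v

/-- Number of edges of `G_•` from `i` to vertices outside `W` (including the edge to the sink). -/
noncomputable def dW (G : SimpleGraph V) (W : Finset V) (i : V) : ℕ :=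
  1 + (Finset.univ.filter (fun u => u ∉ W ∧ G.Adj i u)).card

/-- `c` is a parking function of `G_•` with respect to the added sink `v₀`. -/
def IsPF (G : SimpleGraph V) (c : V → ℤ) : Prop :=
  ∀ W : Finset V, W.Nonempty → ∃ i ∈ W, 0 ≤ c i ∧ c i < dW G W i

/-!
Acyclicity gives every nonempty `W ⊆ V` a source `i` (no edge from `W` into `i`), so all
in-neighbours of `i` lie outside `W` and `indeg i < d_W(i)`; hence `indeg` is a parking function.
For maximality, suppose `c ≥ indeg` with `c v > indeg v`, and let `W` be the set of vertices
reachable from `v`. By totality every neighbour of `i ∈ W` outside `W` is an in-neighbour of `i`,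
so `d_W(i) ≤ indeg i + 1`, and if `i ≠ v` the last step of a path from `v` to `i` is a further
in-neighbour inside `W`, giving `d_W(i) ≤ indeg i`. Either way `c i ≥ d_W(i)` for all `i ∈ W`,
so `c` is not a parking function.
-/

theorem Function.exists_mem_periodicPts {α : Type*} [Finite α] [Nonempty α] (f : α → α) :
    ∃ x, x ∈ Function.periodicPts f := by
  let x₀ := Classical.arbitrary α
  obtain ⟨m, n, hmn, heq⟩ := Set.finite_univ.exists_lt_map_eq_of_forall_mem
    (f := fun n : ℕ => f^[n] x₀) (fun _ => Set.mem_univ _)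
  refine ⟨f^[m] x₀, Function.mk_mem_periodicPts (Nat.sub_pos_of_lt hmn) ?_⟩
  rw [Function.IsPeriodicPt, Function.IsFixedPt, ← Function.iterate_add_apply,
    Nat.sub_add_cancel hmn.le]
  exact heq.symm

theorem Function.exists_injective_cycle {α : Type*} [Finite α] [Nonempty α] (f : α → α) :
    ∃ (k : ℕ) (c : Fin (k + 1) → α), Function.Injective c ∧ ∀ i, c (i + 1) = f (c i) := by
  obtain ⟨x, hx⟩ := Function.exists_mem_periodicPts f
  obtain ⟨k, hk⟩ : ∃ k, Function.minimalPeriod f x = k + 1 :=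
    Nat.exists_eq_succ_of_ne_zero (Function.minimalPeriod_pos_of_mem_periodicPts hx).ne'
  have hper : Function.IsPeriodicPt f (k + 1) x := hk ▸ Function.isPeriodicPt_minimalPeriod f x
  refine ⟨k, fun i => f^[i] x, fun i j hij => Fin.ext ?_, fun i => ?_⟩
  · exact Function.iterate_injOn_Iio_minimalPeriod (by simpa [hk] using i.isLt)
      (by simpa [hk] using j.isLt) hij
  · simp only [Fin.val_add, Fin.val_one', Nat.add_mod_mod, hper.iterate_mod_apply,
      Function.iterate_succ_apply']

theorem exists_source_of_not_hasDirCycle {O : Finset (V × V)} (hloop : ∀ v, (v, v) ∉ O)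
    (hacyc : ¬ HasDirCycle O) {W : Finset V} (hW : W.Nonempty) :
    ∃ i ∈ W, ∀ u ∈ W, (u, i) ∉ O := by
  by_contra! hpred
  choose pred hpredW hpredO using hpred
  have : Nonempty W := hW.to_subtype
  obtain ⟨k, c, hc, hcpred⟩ :=
    Function.exists_injective_cycle fun i : W => (⟨pred i i.2, hpredW i i.2⟩ : W)
  have hstep : ∀ i : Fin (k + 1), ((c i.rev : V), (c (i + 1).rev : V)) ∈ O := fun i => by
    rw [← sub_add_cancel i.rev 1, ← Fin.rev_add, hcpred]
    exact hpredO _ _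
  refine hacyc ⟨k, fun i => c i.rev, Nat.one_le_iff_ne_zero.mpr ?_,
    Subtype.val_injective.comp (hc.comp Fin.rev_injective), hstep⟩
  rintro rfl
  simpa using hloop _ (hstep 0)

theorem indeg_eq_card_filter (O : Finset (V × V)) (v : V) : indeg O v = #{u | (u, v) ∈ O} := by
  refine card_bij' (fun p _ => p.1) (fun u _ => (u, v)) ?_ ?_ ?_ ?_ <;> aesop

theorem indeg_lt_dW_of_forall_not_mem {G : SimpleGraph V} {O : Finset (V × V)}
    (hO : ∀ p ∈ O, G.Adj p.1 p.2) {W : Finset V} {i : V} (hsrc : ∀ u ∈ W, (u, i) ∉ O) :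
    indeg O i < dW G W i := by
  have hsub : ({u | (u, i) ∈ O} : Finset V) ⊆ ({u | u ∉ W ∧ G.Adj i u} : Finset V) :=
      fun u hu => by
      rw [mem_filter] at hu ⊢
      exact ⟨mem_univ u, fun huW => hsrc u huW hu.2, (hO _ hu.2).symm⟩
  rw [indeg_eq_card_filter, dW]
  have := card_le_card hsub
  omega

theorem dW_add_card_le_indeg_add_one {G : SimpleGraph V} {O : Finset (V × V)}
    (htot : IsTotalOn G O) {W : Finset V} (hW : ∀ a ∈ W, ∀ b, (a, b) ∈ O → b ∈ W) {i : V}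
    (hi : i ∈ W) : dW G W i + #{u ∈ W | (u, i) ∈ O} ≤ indeg O i + 1 := by
  have hsub : ({u | u ∉ W ∧ G.Adj i u} : Finset V) ∪ {u ∈ W | (u, i) ∈ O} ⊆
      ({u | (u, i) ∈ O} : Finset V) := by
    intro u hu
    simp only [mem_union, mem_filter, mem_univ, true_and] at hu ⊢
    rcases hu with ⟨huW, hiu⟩ | ⟨-, hui⟩
    · exact (htot i u hiu).resolve_left fun hiu => huW (hW i hi u hiu)
    · exact hui
  have hdisj : Disjoint ({u | u ∉ W ∧ G.Adj i u} : Finset V) {u ∈ W | (u, i) ∈ O} :=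
    disjoint_left.mpr fun u hu hu' => (mem_filter.mp hu).2.1 (mem_filter.mp hu').1
  rw [indeg_eq_card_filter, dW]
  have := card_union_of_disjoint hdisj ▸ card_le_card hsub
  omega

theorem isPF_indeg {G : SimpleGraph V} {O : Finset (V × V)} (hO : ∀ p ∈ O, G.Adj p.1 p.2)
    (hacyc : ¬ HasDirCycle O) : IsPF G fun v => (indeg O v : ℤ) := by
  intro W hW
  obtain ⟨i, hiW, hsrc⟩ :=
    exists_source_of_not_hasDirCycle (fun v hv => G.irrefl (hO _ hv)) hacyc hW
  exact ⟨i, hiW, Int.natCast_nonneg _, Int.ofNat_lt.mpr (indeg_lt_dW_of_forall_not_mem hO hsrc)⟩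

theorem eq_indeg_of_isPF_of_indeg_le {G : SimpleGraph V} {O : Finset (V × V)}
    (htot : IsTotalOn G O) {c : V → ℤ} (hc : IsPF G c) (hle : ∀ v, (indeg O v : ℤ) ≤ c v) :
    c = fun v => (indeg O v : ℤ) := by
  funext v
  by_contra hne
  have hv : (indeg O v : ℤ) < c v := (hle v).lt_of_ne' hne
  let W : Finset V := {u | Relation.ReflTransGen (fun a b => (a, b) ∈ O) v u}
  have hvW : v ∈ W := mem_filter.mpr ⟨mem_univ v, .refl⟩
  have hWclosed : ∀ a ∈ W, ∀ b, (a, b) ∈ O → b ∈ W := fun a ha b hab =>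
    mem_filter.mpr ⟨mem_univ b, (mem_filter.mp ha).2.tail hab⟩
  obtain ⟨i, hiW, -, hci⟩ := hc W ⟨v, hvW⟩
  have hdW := dW_add_card_le_indeg_add_one htot hWclosed hiW
  rcases (mem_filter.mp hiW).2.cases_tail with rfl | ⟨b, hvb, hbi⟩
  · omega
  · have hpred : 0 < #{u ∈ W | (u, i) ∈ O} :=
      card_pos.mpr ⟨b, mem_filter.mpr ⟨mem_filter.mpr ⟨mem_univ b, hvb⟩, hbi⟩⟩
    have := hle i
    omega

/-- The indegree sequence of an acyclic total orientation of `G` is a maximal parking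
function of `G_•` with respect to the sink. -/
theorem indeg_total_acyclic_maximal_parking (G : SimpleGraph V) (O : Finset (V × V))
    (hPO : IsPO G O) (htot : IsTotalOn G O) (hacyc : ¬ HasDirCycle O) :
    IsPF G (fun v => (indeg O v : ℤ)) ∧
      ∀ c : V → ℤ, IsPF G c → (∀ v : V, (indeg O v : ℤ) ≤ c v) →
        c = fun v => (indeg O v : ℤ) :=
  ⟨isPF_indeg (fun p hp => (hPO p hp).1) hacyc,
    fun _ hc hle => eq_indeg_of_isPF_of_indeg_le htot hc hle⟩
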